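/- Let Q_1 and Q_2 be convex polygons in the plane such that for every unit vector n, the face of Q_1 with outward normal n is a segment (edge) if and only if the face of Q_2 with outward normal n is a segment, and in that case the two edges have equal length. Then Q_2 is a translate of Q_1. -/

import Mathlib

open MeasureTheory

noncomputable section

/-- A convex polygon in the plane: the convex hull of a finite set of points,
with nonempty interior. -/
def IsConvexPolygon (P : Set (EuclideanSpace ℝ (Fin 2))) : Prop :=
  (∃ S : Finset (EuclideanSpace ℝ (Fin 2)), P = convexHull ℝ (S : Set (EuclideanSpace ℝ (Fin 2)))) ∧
  (interior P).Nonempty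

/-- The face of `P` with outward normal vector `n`: the set of maximizers of `⟪·, n⟫` on `P`. -/
def face (P : Set (EuclideanSpace ℝ (Fin 2))) (n : EuclideanSpace ℝ (Fin 2)) :
    Set (EuclideanSpace ℝ (Fin 2)) :=
  {x | x ∈ P ∧ ∀ y ∈ P, inner (𝕜 := ℝ) y n ≤ inner (𝕜 := ℝ) x n}

/-- The dimension of a face: the dimension of its affine hull. -/
def faceDim (F : Set (EuclideanSpace ℝ (Fin 2))) : ℕ :=
  Module.finrank ℝ (affineSpan ℝ F).direction

/-- `F` is a side (1-dimensional face) of the convex polygon `P`. -/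
def IsSide (P F : Set (EuclideanSpace ℝ (Fin 2))) : Prop :=
  ∃ n : EuclideanSpace ℝ (Fin 2), ‖n‖ = 1 ∧ F = face P n ∧ faceDim F = 1

/-- Two segments are parallel: the lines containing them have the same direction. -/
def SegParallel (F G : Set (EuclideanSpace ℝ (Fin 2))) : Prop :=
  (affineSpan ℝ F).direction = (affineSpan ℝ G).direction

/-- The perimeter of a convex body: the 1-dimensional Hausdorff measure of its boundary. -/
def perimeter (P : Set (EuclideanSpace ℝ (Fin 2))) : ℝ :=
  (μH[(1 : ℝ)] (frontier P)).toReal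

/-- `Q` is a translate of `P`. -/
def IsTranslate (P Q : Set (EuclideanSpace ℝ (Fin 2))) : Prop :=
  ∃ v : EuclideanSpace ℝ (Fin 2), Q = (fun x => v + x) '' P

open RealInnerProductSpace Set

abbrev E2 := EuclideanSpace ℝ (Fin 2)

lemma face_subset (P : Set E2) (n : E2) : face P n ⊆ P := fun _ hx => hx.1

lemma inner_eq_of_mem_face {P : Set E2} {n x y : E2} (hx : x ∈ face P n) (hy : y ∈ face P n) :
    ⟪x, n⟫ = ⟪y, n⟫ := le_antisymm (hy.2 x hx.1) (hx.2 y hy.1)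

lemma face_nonempty {P : Set E2} (hP : IsCompact P) (hne : P.Nonempty) (n : E2) :
    (face P n).Nonempty := by
  obtain ⟨x, hx, hmax⟩ := hP.exists_isMaxOn (f := fun y : E2 => ⟪y, n⟫) hne
    (Continuous.continuousOn (continuous_id.inner continuous_const))
  exact ⟨x, hx, fun y hy => hmax hy⟩

lemma face_isCompact {P : Set E2} (hP : IsCompact P) (n : E2) : IsCompact (face P n) := by
  have hcl : IsClosed (face P n) := by
    have : face P n = P ∩ ⋂ y ∈ P, {x : E2 | ⟪y, n⟫ ≤ ⟪x, n⟫} := by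
      ext x; simp only [face, mem_setOf_eq, mem_inter_iff, mem_iInter]
    rw [this]
    exact hP.isClosed.inter <| isClosed_biInter fun y _ =>
      isClosed_le continuous_const (continuous_id.inner continuous_const)
  exact hP.of_isClosed_subset hcl (face_subset P n)

lemma face_convex {P : Set E2} (hP : Convex ℝ P) (n : E2) : Convex ℝ (face P n) := by
  intro x hx y hy a b ha hb hab
  refine ⟨hP hx.1 hy.1 ha hb hab, fun z hz => ?_⟩
  have h1 := hx.2 z hz
  have h2 := hy.2 z hz
  rw [inner_add_left, real_inner_smul_left, real_inner_smul_left]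
  have h3 : a * ⟪z, n⟫ + b * ⟪z, n⟫ = ⟪z, n⟫ := by rw [← add_mul, hab, one_mul]
  nlinarith [mul_le_mul_of_nonneg_left h1 ha, mul_le_mul_of_nonneg_left h2 hb]

lemma face_smul {P : Set E2} {c : ℝ} (hc : 0 < c) (n : E2) : face P (c • n) = face P n := by
  ext x
  simp only [face, mem_setOf_eq, real_inner_smul_right]
  exact and_congr_right fun _ => by
    constructor <;> intro H y hy
    · exact le_of_mul_le_mul_left (H y hy) hc
    · exact mul_le_mul_of_nonneg_left (H y hy) hc.le

lemma face_singleton (p k : E2) : face {p} k = {p} := by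
  ext x
  simp only [face, mem_singleton_iff, mem_setOf_eq]
  exact ⟨fun h => h.1, fun h => ⟨h, by rintro y rfl; rw [h]⟩⟩

def rot (n : E2) : E2 := (WithLp.equiv 2 (Fin 2 → ℝ)).symm ![-(n 1), n 0]

lemma rot_apply0 (n : E2) : rot n 0 = -(n 1) := rfl
lemma rot_apply1 (n : E2) : rot n 1 = n 0 := rfl

lemma inner_coords (x y : E2) : ⟪x, y⟫ = x 0 * y 0 + x 1 * y 1 := by
  simp [PiLp.inner_apply, Fin.sum_univ_two, RCLike.inner_apply, mul_comm]

lemma inner_n_rot (n : E2) : ⟪n, rot n⟫ = 0 := by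
  rw [inner_coords, rot_apply0, rot_apply1]; ring

lemma inner_rot_rot (n : E2) : ⟪rot n, rot n⟫ = ⟪n, n⟫ := by
  rw [inner_coords, inner_coords, rot_apply0, rot_apply1]; ring

lemma norm_rot (n : E2) : ‖rot n‖ = ‖n‖ := by
  have h := inner_rot_rot n
  rw [real_inner_self_eq_norm_mul_norm, real_inner_self_eq_norm_mul_norm] at h
  nlinarith [norm_nonneg (rot n), norm_nonneg n]

lemma rot_ne_zero {n : E2} (hn : n ≠ 0) : rot n ≠ 0 := by
  intro h
  apply hn
  have := norm_rot n
  rw [h, norm_zero] at this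
  exact norm_eq_zero.mp this.symm

lemma rot_smul (c : ℝ) (n : E2) : rot (c • n) = c • rot n := by
  ext i
  fin_cases i
  · show rot (c • n) 0 = (c • rot n) 0
    rw [rot_apply0]
    show -((c • n) 1) = c * rot n 0
    rw [rot_apply0]
    show -(c * n 1) = c * -(n 1)
    ring
  · show rot (c • n) 1 = (c • rot n) 1
    rw [rot_apply1]
    show (c • n) 0 = c * rot n 1
    rw [rot_apply1]
    rfl

lemma finrank_orth {n : E2} (hn : n ≠ 0) : Module.finrank ℝ ((ℝ ∙ n)ᗮ) = 1 := by
  have h := Submodule.finrank_add_finrank_orthogonal (K := (ℝ ∙ n)) (𝕜 := ℝ) (E := E2)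
  rw [finrank_span_singleton hn] at h
  have h2 : Module.finrank ℝ E2 = 2 := finrank_euclideanSpace_fin
  omega

lemma span_rot {n : E2} (hn : n ≠ 0) : (ℝ ∙ rot n) = (ℝ ∙ n)ᗮ := by
  have hle : (ℝ ∙ rot n) ≤ (ℝ ∙ n)ᗮ := by
    rw [Submodule.span_singleton_le_iff_mem]
    exact Submodule.mem_orthogonal_singleton_iff_inner_right.mpr (inner_n_rot n)
  exact Submodule.eq_of_le_of_finrank_eq hle
    (by rw [finrank_span_singleton (rot_ne_zero hn), finrank_orth hn])

lemma face_direction_le {P : Set E2} (n : E2) :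
    (affineSpan ℝ (face P n)).direction ≤ (ℝ ∙ n)ᗮ := by
  rw [direction_affineSpan, vectorSpan_def]
  rw [Submodule.span_le]
  rintro u ⟨x, hx, y, hy, rfl⟩
  rw [SetLike.mem_coe, Submodule.mem_orthogonal_singleton_iff_inner_right]
  show ⟪n, x - y⟫ = 0
  rw [inner_sub_right, ← real_inner_comm n x, ← real_inner_comm n y,
    inner_eq_of_mem_face hx hy, sub_self]

lemma faceDim_le_one {P : Set E2} {n : E2} (hn : n ≠ 0) : faceDim (face P n) ≤ 1 := by
  have := Submodule.finrank_mono (face_direction_le (P := P) n)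
  rw [finrank_orth hn] at this
  exact this

lemma face_eq_singleton_of_dim_ne_one {P : Set E2} {n : E2} (hn : n ≠ 0)
    (hP : IsCompact P) (hne : P.Nonempty) (hdim : faceDim (face P n) ≠ 1) :
    ∃ p, face P n = {p} := by
  have h0 : faceDim (face P n) = 0 := by
    have := faceDim_le_one (P := P) hn
    omega
  have hbot : (affineSpan ℝ (face P n)).direction = ⊥ := by
    rwa [faceDim, Submodule.finrank_eq_zero] at h0
  obtain ⟨p, hp⟩ := face_nonempty hP hne n
  refine ⟨p, Set.eq_singleton_iff_unique_mem.mpr ⟨hp, fun x hx => ?_⟩⟩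
  have hmem : x -ᵥ p ∈ (affineSpan ℝ (face P n)).direction :=
    AffineSubspace.vsub_mem_direction (subset_affineSpan ℝ _ hx) (subset_affineSpan ℝ _ hp)
  rw [hbot, Submodule.mem_bot] at hmem
  have : x - p = 0 := hmem
  linear_combination (norm := module) this

def AmaxS (S : Finset E2) (n : E2) : Set E2 :=
  {s | s ∈ S ∧ ∀ t ∈ S, ⟪t, n⟫ ≤ ⟪s, n⟫}

lemma amax_nonempty {S : Finset E2} (hS : S.Nonempty) (n : E2) : (AmaxS S n).Nonempty := by
  obtain ⟨b, hb, hmax⟩ := S.exists_max_image (fun s => ⟪s, n⟫) hS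
  exact ⟨b, hb, hmax⟩

lemma amax_subset_face (S : Finset E2) (n : E2) :
    AmaxS S n ⊆ face (convexHull ℝ (S : Set E2)) n := by
  rintro s ⟨hsS, hmax⟩
  refine ⟨subset_convexHull ℝ _ hsS, fun y hy => ?_⟩
  have hconv : (S : Set E2) ⊆ {y : E2 | ⟪y, n⟫ ≤ ⟪s, n⟫} := fun t ht => hmax t ht
  have hhalf : Convex ℝ {y : E2 | ⟪y, n⟫ ≤ ⟪s, n⟫} :=
    convex_halfSpace_le ⟨fun a b => inner_add_left a b n, fun c a => real_inner_smul_left a n c⟩ _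
  exact convexHull_min hconv hhalf hy

lemma face_eq_convexHull_amax {S : Finset E2} (hS : S.Nonempty) (n : E2) :
    face (convexHull ℝ (S : Set E2)) n = convexHull ℝ (AmaxS S n) := by
  apply Set.Subset.antisymm
  · intro x hx
    have hxhull : x ∈ convexHull ℝ (S : Set E2) := face_subset _ _ hx
    rw [Finset.convexHull_eq] at hxhull
    obtain ⟨w, hw0, hw1, hwx⟩ := hxhull
    obtain ⟨s₀, hs₀⟩ := amax_nonempty hS n
    have hxM : ⟪x, n⟫ = ⟪s₀, n⟫ := inner_eq_of_mem_face hx (amax_subset_face S n hs₀)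
    have hsum : ⟪x, n⟫ = ∑ t ∈ S, w t * ⟪t, n⟫ := by
      rw [← hwx, Finset.centerMass_eq_of_sum_1 _ _ hw1, sum_inner]
      exact Finset.sum_congr rfl fun i _ => real_inner_smul_left _ _ _
    have hkey : ∀ t ∈ S, w t ≠ 0 → t ∈ AmaxS S n := by
      intro t₁ ht₁ hwt₁
      by_contra hnot
      have hlt : ⟪t₁, n⟫ < ⟪s₀, n⟫ := by
        rcases lt_or_eq_of_le (hs₀.2 t₁ ht₁) with h | h
        · exact h
        · exact absurd ⟨ht₁, fun t ht => h ▸ hs₀.2 t ht⟩ hnot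
      have hstrict : ∑ t ∈ S, w t * ⟪t, n⟫ < ∑ t ∈ S, w t * ⟪s₀, n⟫ := by
        apply Finset.sum_lt_sum
        · exact fun i hi => mul_le_mul_of_nonneg_left (hs₀.2 i hi) (hw0 i hi)
        · exact ⟨t₁, ht₁, mul_lt_mul_of_pos_left hlt (lt_of_le_of_ne (hw0 t₁ ht₁) (Ne.symm hwt₁))⟩
      rw [← Finset.sum_mul, hw1, one_mul] at hstrict
      rw [hxM] at hsum
      linarith [hsum ▸ hstrict]
    have hres : (S.filter fun i => w i ≠ 0).centerMass w id ∈ convexHull ℝ (AmaxS S n) := by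
      apply Finset.centerMass_mem_convexHull
      · exact fun i hi => hw0 i (Finset.mem_filter.mp hi).1
      · rw [Finset.sum_filter_ne_zero, hw1]; exact one_pos
      · intro i hi
        obtain ⟨hiS, hwi⟩ := Finset.mem_filter.mp hi
        exact hkey i hiS hwi
    rwa [Finset.centerMass_filter_ne_zero, hwx] at hres
  · exact convexHull_min (amax_subset_face S n)
      (face_convex (convex_convexHull ℝ _) n)

lemma amax_stable {S : Finset E2} (hS : S.Nonempty) (n : E2) :
    ∃ U : Set E2, IsOpen U ∧ n ∈ U ∧ ∀ n' ∈ U, AmaxS S n' ⊆ AmaxS S n := by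
  classical
  refine ⟨⋂ s ∈ (S : Set E2), ⋂ t ∈ (S : Set E2),
    {n' : E2 | s ∉ AmaxS S n ∧ t ∈ AmaxS S n → ⟪s, n'⟫ < ⟪t, n'⟫}, ?_, ?_, ?_⟩
  · apply Set.Finite.isOpen_biInter S.finite_toSet
    intro s _
    apply Set.Finite.isOpen_biInter S.finite_toSet
    intro t _
    by_cases hc : s ∉ AmaxS S n ∧ t ∈ AmaxS S n
    · have : {n' : E2 | s ∉ AmaxS S n ∧ t ∈ AmaxS S n → ⟪s, n'⟫ < ⟪t, n'⟫}
          = {n' : E2 | ⟪s, n'⟫ < ⟪t, n'⟫} := by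
        ext n'; simp only [Set.mem_setOf_eq]; exact ⟨fun H => H hc, fun H _ => H⟩
      rw [this]
      exact isOpen_lt (continuous_const.inner continuous_id) (continuous_const.inner continuous_id)
    · have : {n' : E2 | s ∉ AmaxS S n ∧ t ∈ AmaxS S n → ⟪s, n'⟫ < ⟪t, n'⟫} = Set.univ := by
        ext n'; simp only [Set.mem_setOf_eq, Set.mem_univ, iff_true]
        exact fun H => absurd H hc
      rw [this]; exact isOpen_univ
  · refine Set.mem_iInter₂.mpr fun s hs => Set.mem_iInter₂.mpr fun t ht => ?_
    rintro ⟨hsA, htA⟩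
    have hsS : s ∈ S := hs
    have : ¬ ∀ u ∈ S, ⟪u, n⟫ ≤ ⟪s, n⟫ := fun H => hsA ⟨hsS, H⟩
    push_neg at this
    obtain ⟨u, huS, hu⟩ := this
    exact lt_of_lt_of_le hu (htA.2 u huS)
  · intro n' hn' s' hs'
    by_contra hnot
    obtain ⟨t, htA⟩ := amax_nonempty hS n
    have hs'S : s' ∈ S := hs'.1
    have htS : t ∈ S := htA.1
    have h1 : ⟪s', n'⟫ < ⟪t, n'⟫ := by
      have := Set.mem_iInter₂.mp (Set.mem_iInter₂.mp hn' s' hs'S) t htS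
      exact this ⟨hnot, htA⟩
    exact absurd (hs'.2 t htS) (not_le.mpr h1)

lemma param_of_dim_one {F : Set E2} (hF : IsCompact F) (hFc : Convex ℝ F) (hne : F.Nonempty)
    {e : E2} (he : ‖e‖ = 1) (hdir : (affineSpan ℝ F).direction = ℝ ∙ e) :
    ∃ a : E2, ∃ l : ℝ, 0 < l ∧ F = (fun t : ℝ => a + t • e) '' Set.Icc 0 l := by
  obtain ⟨x₀, hx₀⟩ := hne
  set φ : E2 → ℝ := fun x => ⟪x - x₀, e⟫ with hφ
  have hφval : ∀ t : ℝ, φ (x₀ + t • e) = t := by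
    intro t
    show ⟪x₀ + t • e - x₀, e⟫ = t
    have h1 : x₀ + t • e - x₀ = t • e := by abel
    rw [h1, real_inner_smul_left, real_inner_self_eq_norm_mul_norm, he]; ring
  have hrep : ∀ x ∈ F, x = x₀ + (φ x) • e := by
    intro x hx
    have hmem : x -ᵥ x₀ ∈ (affineSpan ℝ F).direction :=
      AffineSubspace.vsub_mem_direction (subset_affineSpan ℝ _ hx) (subset_affineSpan ℝ _ hx₀)
    rw [hdir, Submodule.mem_span_singleton] at hmem
    obtain ⟨c, hc⟩ := hmem
    have hsub : x = x₀ + c • e := by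
      have : x - x₀ = c • e := hc.symm
      linear_combination (norm := abel) this
    rw [hsub, hφval]
  have hφcont : Continuous φ := (continuous_id.sub continuous_const).inner continuous_const
  set K : Set ℝ := φ '' F with hK
  have hKcpt : IsCompact K := hF.image hφcont
  have hKne : K.Nonempty := ⟨φ x₀, x₀, hx₀, rfl⟩
  set α : ℝ := sInf K with hα
  set β : ℝ := sSup K with hβ
  have hαK : α ∈ K := hKcpt.sInf_mem hKne
  have hβK : β ∈ K := hKcpt.sSup_mem hKne
  have hbdd : ∀ x ∈ F, α ≤ φ x ∧ φ x ≤ β := fun x hx =>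
    ⟨csInf_le hKcpt.bddBelow ⟨x, hx, rfl⟩, le_csSup hKcpt.bddAbove ⟨x, hx, rfl⟩⟩
  set a : E2 := x₀ + α • e with ha
  set b : E2 := x₀ + β • e with hb
  have haF : a ∈ F := by
    obtain ⟨xa, hxa, hφa⟩ := hαK
    have h2 := hrep xa hxa
    rw [hφa] at h2
    rw [ha]
    exact h2 ▸ hxa
  have hbF : b ∈ F := by
    obtain ⟨xb, hxb, hφb⟩ := hβK
    have h2 := hrep xb hxb
    rw [hφb] at h2
    rw [hb]
    exact h2 ▸ hxb
  have hαβ : α ≤ β := csInf_le_csSup hKne hKcpt.bddBelow hKcpt.bddAbove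
  set l : ℝ := β - α with hl
  have hl0 : 0 < l := by
    rcases lt_or_eq_of_le hαβ with hlt | heq
    · simpa [hl] using sub_pos.mpr hlt
    · exfalso
      have hFa : F = {a} := by
        apply Set.eq_singleton_iff_unique_mem.mpr ⟨haF, fun x hx => ?_⟩
        have h2 := hrep x hx
        have h3 : φ x = α := le_antisymm (heq ▸ (hbdd x hx).2) (hbdd x hx).1
        rw [h3] at h2
        exact h2
      rw [hFa, direction_affineSpan, vectorSpan_singleton] at hdir
      have : e = 0 := (Submodule.span_singleton_eq_bot).mp hdir.symm
      rw [this, norm_zero] at he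
      norm_num at he
  have hba : b = a + l • e := by
    rw [ha, hb, hl]
    have : (β - α) • e = β • e - α • e := sub_smul β α e
    rw [this]
    abel
  refine ⟨a, l, hl0, ?_⟩
  apply Set.Subset.antisymm
  · intro x hx
    refine ⟨φ x - α, ⟨sub_nonneg.mpr (hbdd x hx).1, ?_⟩, ?_⟩
    · rw [hl]; exact sub_le_sub_right (hbdd x hx).2 α
    · show a + (φ x - α) • e = x
      have hstep : a + (φ x - α) • e = x₀ + φ x • e := by
        rw [ha, sub_smul]; abel
      rw [hstep]
      exact (hrep x hx).symm
  · rintro x ⟨t, ⟨ht0, htl⟩, rfl⟩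
    have hc2 : 0 ≤ t / l := div_nonneg ht0 hl0.le
    have hc1 : 0 ≤ 1 - t / l := by
      rw [sub_nonneg, div_le_one hl0]; exact htl
    have hcs : (1 - t / l) + t / l = 1 := by ring
    have hmem := hFc haF hbF hc1 hc2 hcs
    have hval : (1 - t / l) • a + (t / l) • b = a + t • e := by
      rw [hba]
      match_scalars
      · ring
      · field_simp
        ring
    rwa [hval] at hmem

lemma hausdorff_param (a e : E2) {l : ℝ} (he : ‖e‖ = 1) (hl : 0 ≤ l) :
    μH[(1 : ℝ)] ((fun t : ℝ => a + t • e) '' Set.Icc 0 l) = ENNReal.ofReal l := by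
  have hiso : Isometry (fun t : ℝ => a + t • e) := by
    apply Isometry.of_dist_eq
    intro s t
    rw [dist_eq_norm, dist_eq_norm]
    have : a + s • e - (a + t • e) = (s - t) • e := by
      rw [sub_smul]; abel
    rw [this, norm_smul, he, mul_one, Real.norm_eq_abs]
  rw [hiso.hausdorffMeasure_image (Or.inl zero_le_one)]
  rw [MeasureTheory.hausdorffMeasure_real, Real.volume_Icc, sub_zero]

lemma face_image_param {a e : E2} {l : ℝ} (hl : 0 < l) {m : E2} (hm : 0 < ⟪e, m⟫) :
    face ((fun t : ℝ => a + t • e) '' Set.Icc 0 l) m = {a + l • e} := by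
  have hkey : ∀ t : ℝ, ⟪a + t • e, m⟫ = ⟪a, m⟫ + t * ⟪e, m⟫ := fun t => by
    rw [inner_add_left, real_inner_smul_left]
  ext x
  simp only [Set.mem_singleton_iff]
  constructor
  · rintro ⟨⟨t, ⟨ht0, htl⟩, rfl⟩, hmax⟩
    have hb : a + l • e ∈ (fun t : ℝ => a + t • e) '' Set.Icc 0 l :=
      ⟨l, ⟨hl.le, le_refl l⟩, rfl⟩
    have := hmax _ hb
    rw [hkey, hkey] at this
    have htl' : l ≤ t := by
      have := sub_nonneg.mpr this
      nlinarith
    have : t = l := le_antisymm htl htl'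
    rw [this]
  · rintro rfl
    refine ⟨⟨l, ⟨hl.le, le_refl l⟩, rfl⟩, ?_⟩
    rintro y ⟨t, ⟨ht0, htl⟩, rfl⟩
    rw [hkey, hkey]
    have : t * ⟪e, m⟫ ≤ l * ⟪e, m⟫ := mul_le_mul_of_nonneg_right htl hm.le
    linarith

open scoped Classical in
def endpt (P : Set E2) (n : E2) : E2 :=
  if h : (face (face P n) (rot n)).Nonempty then h.some else 0

lemma endpt_mem {P : Set E2} (hP : IsCompact P) (hne : P.Nonempty) (n : E2) :
    endpt P n ∈ face (face P n) (rot n) := by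
  have h : (face (face P n) (rot n)).Nonempty :=
    face_nonempty (face_isCompact hP n) (face_nonempty hP hne n) (rot n)
  rw [endpt, dif_pos h]
  exact h.some_mem

lemma endpt_eq_of_singleton {P : Set E2} {n q : E2}
    (hs : face (face P n) (rot n) = {q}) : endpt P n = q := by
  have h : (face (face P n) (rot n)).Nonempty := by rw [hs]; exact ⟨q, rfl⟩
  rw [endpt, dif_pos h]
  have huniq : ∀ x ∈ face (face P n) (rot n), x = q := fun x hx => by
    rw [hs] at hx; exact hx
  exact huniq _ h.some_mem

lemma faceDim_singleton (p : E2) : faceDim {p} = 0 := by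
  rw [faceDim, direction_affineSpan, vectorSpan_singleton, finrank_bot]


/-- **Special case of Lemma 4.4.** If two convex polygons are such that, for every unit
vector `n`, the face of one with outward normal `n` is an edge iff the face of the other
is an edge, and in that case the edges have equal length, then the polygons are translates
of each other. -/
theorem parallel_polygons_equal_edges_translate
    (Q₁ Q₂ : Set (EuclideanSpace ℝ (Fin 2)))
    (h₁ : IsConvexPolygon Q₁) (h₂ : IsConvexPolygon Q₂)
    (h : ∀ n : EuclideanSpace ℝ (Fin 2), ‖n‖ = 1 →
      (faceDim (face Q₁ n) = 1 ↔ faceDim (face Q₂ n) = 1) ∧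
      (faceDim (face Q₁ n) = 1 → μH[(1 : ℝ)] (face Q₁ n) = μH[(1 : ℝ)] (face Q₂ n))) :
    IsTranslate Q₁ Q₂ := by
  classical
  obtain ⟨⟨S₁, hS₁⟩, hint₁⟩ := h₁
  obtain ⟨⟨S₂, hS₂⟩, hint₂⟩ := h₂
  have hQ₁ne : Q₁.Nonempty := hint₁.mono interior_subset
  have hQ₂ne : Q₂.Nonempty := hint₂.mono interior_subset
  have hS₁ne : S₁.Nonempty := by
    rw [← Finset.coe_nonempty]
    exact convexHull_nonempty_iff.mp (hS₁ ▸ hQ₁ne)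
  have hS₂ne : S₂.Nonempty := by
    rw [← Finset.coe_nonempty]
    exact convexHull_nonempty_iff.mp (hS₂ ▸ hQ₂ne)
  have hQ₁cpt : IsCompact Q₁ := hS₁ ▸ S₁.finite_toSet.isCompact_convexHull ℝ
  have hQ₂cpt : IsCompact Q₂ := hS₂ ▸ S₂.finite_toSet.isCompact_convexHull ℝ
  have hQ₁cvx : Convex ℝ Q₁ := hS₁ ▸ convex_convexHull ℝ _
  have hQ₂cvx : Convex ℝ Q₂ := hS₂ ▸ convex_convexHull ℝ _
  have hA₁f : ∀ k, AmaxS S₁ k ⊆ face Q₁ k := fun k => by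
    rw [hS₁]; exact amax_subset_face S₁ k
  have hA₂f : ∀ k, AmaxS S₂ k ⊆ face Q₂ k := fun k => by
    rw [hS₂]; exact amax_subset_face S₂ k
  have hC₁ : ∀ k, face Q₁ k = convexHull ℝ (AmaxS S₁ k) := fun k => by
    rw [hS₁]; exact face_eq_convexHull_amax hS₁ne k
  have hC₂ : ∀ k, face Q₂ k = convexHull ℝ (AmaxS S₂ k) := fun k => by
    rw [hS₂]; exact face_eq_convexHull_amax hS₂ne k
  have hT : ∀ n : E2, n ≠ 0 →
      ((faceDim (face Q₁ n) = 1 ↔ faceDim (face Q₂ n) = 1) ∧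
       (faceDim (face Q₁ n) = 1 → μH[(1 : ℝ)] (face Q₁ n) = μH[(1 : ℝ)] (face Q₂ n))) := by
    intro n hn
    have hpos : 0 < ‖n‖⁻¹ := inv_pos.mpr (norm_pos_iff.mpr hn)
    have hu : ‖(‖n‖⁻¹ • n)‖ = 1 := by
      rw [norm_smul, norm_inv, norm_norm, inv_mul_cancel₀ (norm_ne_zero_iff.mpr hn)]
    have e₁ : face Q₁ (‖n‖⁻¹ • n) = face Q₁ n := face_smul hpos n
    have e₂ : face Q₂ (‖n‖⁻¹ • n) = face Q₂ n := face_smul hpos n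
    have := h _ hu
    rw [e₁, e₂] at this
    exact this
  set vb : E2 → E2 := fun n => endpt Q₂ n - endpt Q₁ n with hvbdef
  -- local constancy
  have loc : ∀ n : E2, n ≠ 0 → ∃ W : Set E2, IsOpen W ∧ n ∈ W ∧ (∀ m ∈ W, m ≠ 0) ∧
      ∀ m ∈ W, vb m = vb n := by
    intro n hn
    obtain ⟨U₁, hU₁o, hnU₁, hU₁⟩ := amax_stable hS₁ne n
    obtain ⟨U₂, hU₂o, hnU₂, hU₂⟩ := amax_stable hS₂ne n
    by_cases hedge : faceDim (face Q₁ n) = 1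
    · -- EDGE CASE
      have hd₂ : faceDim (face Q₂ n) = 1 := (hT n hn).1.mp hedge
      have hrot0 : rot n ≠ 0 := rot_ne_zero hn
      have hrotpos : 0 < ‖rot n‖ := norm_pos_iff.mpr hrot0
      have hex : ∃ e : E2, ‖e‖ = 1 ∧ (ℝ ∙ e) = (ℝ ∙ n)ᗮ ∧ 0 < ⟪e, rot n⟫ := by
        refine ⟨‖rot n‖⁻¹ • rot n, ?_, ?_, ?_⟩
        · rw [norm_smul, norm_inv, norm_norm, inv_mul_cancel₀ hrotpos.ne']
        · rw [Submodule.span_singleton_smul_eq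
            (isUnit_iff_ne_zero.mpr (inv_ne_zero hrotpos.ne')) _, span_rot hn]
        · rw [real_inner_smul_left, real_inner_self_eq_norm_mul_norm]
          positivity
      obtain ⟨e, he1, hspan_e, hem⟩ := hex
      have he0 : e ≠ 0 := by
        intro hh; rw [hh, norm_zero] at he1; norm_num at he1
      have hdir : ∀ (Q : Set E2), faceDim (face Q n) = 1 →
          (affineSpan ℝ (face Q n)).direction = ℝ ∙ e := by
        intro Q hdQ
        have hle : (affineSpan ℝ (face Q n)).direction ≤ ℝ ∙ e :=
          hspan_e ▸ face_direction_le n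
        exact Submodule.eq_of_le_of_finrank_eq hle
          (by rw [finrank_span_singleton he0]; exact hdQ)
      obtain ⟨a₁, l₁, hl₁, hF₁⟩ := param_of_dim_one (face_isCompact hQ₁cpt n)
        (face_convex hQ₁cvx n) (face_nonempty hQ₁cpt hQ₁ne n) he1 (hdir Q₁ hedge)
      obtain ⟨a₂, l₂, hl₂, hF₂⟩ := param_of_dim_one (face_isCompact hQ₂cpt n)
        (face_convex hQ₂cvx n) (face_nonempty hQ₂cpt hQ₂ne n) he1 (hdir Q₂ hd₂)
      have hmeas := (hT n hn).2 hedge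
      rw [hF₁, hF₂, hausdorff_param _ _ he1 hl₁.le, hausdorff_param _ _ he1 hl₂.le] at hmeas
      have hll : l₂ = l₁ := ((ENNReal.ofReal_eq_ofReal_iff hl₁.le hl₂.le).mp hmeas).symm
      subst hll
      have hface₁ : face (face Q₁ n) (rot n) = {a₁ + l₂ • e} := by
        rw [hF₁]; exact face_image_param hl₁ hem
      have hface₂ : face (face Q₂ n) (rot n) = {a₂ + l₂ • e} := by
        rw [hF₂]; exact face_image_param hl₂ hem
      have hb₁ : endpt Q₁ n = a₁ + l₂ • e := endpt_eq_of_singleton hface₁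
      have hb₂ : endpt Q₂ n = a₂ + l₂ • e := endpt_eq_of_singleton hface₂
      have hnnorm : 0 < ‖n‖ := norm_pos_iff.mpr hn
      refine ⟨U₁ ∩ U₂ ∩ Metric.ball n ‖n‖,
        (hU₁o.inter hU₂o).inter Metric.isOpen_ball,
        ⟨⟨hnU₁, hnU₂⟩, Metric.mem_ball_self hnnorm⟩, ?_, ?_⟩
      · rintro m ⟨-, hmb⟩ rfl
        rw [Metric.mem_ball, dist_zero_left] at hmb
        exact lt_irrefl _ hmb
      · intro m hm
        obtain ⟨⟨hmU₁, hmU₂⟩, hmball⟩ := hm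
        have hm0 : m ≠ 0 := by
          rintro rfl
          rw [Metric.mem_ball, dist_zero_left] at hmball
          exact lt_irrefl _ hmball
        have hkey : ∀ (t : ℝ) (aa : E2), ⟪aa + t • e, m⟫ = ⟪aa, m⟫ + t * ⟪e, m⟫ := by
          intro t aa; rw [inner_add_left, real_inner_smul_left]
        by_cases hme : ⟪e, m⟫ = 0
        · -- ray case
          have hmperp : m ∈ (ℝ ∙ e)ᗮ :=
            Submodule.mem_orthogonal_singleton_iff_inner_right.mpr hme
          rw [hspan_e, Submodule.orthogonal_orthogonal] at hmperp
          obtain ⟨c, hc⟩ := Submodule.mem_span_singleton.mp hmperp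
          have hc0 : 0 < c := by
            by_contra hcle
            push_neg at hcle
            have hd : dist m n = |c - 1| * ‖n‖ := by
              rw [dist_eq_norm, ← hc]
              have : c • n - n = (c - 1) • n := by
                rw [sub_smul, one_smul]
              rw [this, norm_smul, Real.norm_eq_abs]
            rw [Metric.mem_ball, hd] at hmball
            have : (1 : ℝ) ≤ |c - 1| := by
              rw [abs_of_nonpos (by linarith)]
              linarith
            nlinarith
          have hf₁ : face Q₁ m = face Q₁ n := by rw [← hc]; exact face_smul hc0 n
          have hf₂ : face Q₂ m = face Q₂ n := by rw [← hc]; exact face_smul hc0 n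
          have hrotm : rot m = c • rot n := by rw [← hc, rot_smul]
          have hff₁ : face (face Q₁ m) (rot m) = {a₁ + l₂ • e} := by
            rw [hf₁, hrotm, face_smul hc0, hface₁]
          have hff₂ : face (face Q₂ m) (rot m) = {a₂ + l₂ • e} := by
            rw [hf₂, hrotm, face_smul hc0, hface₂]
          have he₁m := endpt_eq_of_singleton hff₁
          have he₂m := endpt_eq_of_singleton hff₂
          simp only [hvbdef]
          rw [he₁m, he₂m, hb₁, hb₂]
        · -- transversal case
          have hnotedge : faceDim (face Q₁ m) ≠ 1 := by
            intro hd
            have hpair : ∃ x ∈ AmaxS S₁ m, ∃ y ∈ AmaxS S₁ m, x ≠ y := by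
              by_contra hno
              push_neg at hno
              obtain ⟨x, hx⟩ := amax_nonempty hS₁ne m
              have hsub : AmaxS S₁ m = {x} :=
                Set.eq_singleton_iff_unique_mem.mpr ⟨hx, fun y hy => hno y hy x hx⟩
              have hfx : face Q₁ m = {x} := by
                rw [hC₁ m, hsub, convexHull_singleton]
              rw [hfx, faceDim_singleton] at hd
              norm_num at hd
            obtain ⟨x, hxA, y, hyA, hxy⟩ := hpair
            have hxF : x ∈ face Q₁ n := hA₁f n (hU₁ m hmU₁ hxA)
            have hyF : y ∈ face Q₁ n := hA₁f n (hU₁ m hmU₁ hyA)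
            rw [hF₁] at hxF hyF
            obtain ⟨s, hs, hsx⟩ := hxF
            obtain ⟨t, ht, hty⟩ := hyF
            have hinner : ⟪x, m⟫ = ⟪y, m⟫ :=
              le_antisymm (hyA.2 x hxA.1) (hxA.2 y hyA.1)
            have hxv : ⟪x, m⟫ = ⟪a₁, m⟫ + s * ⟪e, m⟫ := by
              rw [← hsx]; exact hkey s a₁
            have hyv : ⟪y, m⟫ = ⟪a₁, m⟫ + t * ⟪e, m⟫ := by
              rw [← hty]; exact hkey t a₁
            have hst : s ≠ t := by
              intro hh
              apply hxy
              rw [← hsx, ← hty, hh]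
            have hzero : (s - t) * ⟪e, m⟫ = 0 := by
              rw [hxv, hyv] at hinner; ring_nf; ring_nf at hinner; linarith
            rcases mul_eq_zero.mp hzero with hh | hh
            · exact hst (by linarith [sub_eq_zero.mp hh])
            · exact hme hh
          have hd₂m : faceDim (face Q₂ m) ≠ 1 := fun hd => hnotedge ((hT m hm0).1.mpr hd)
          obtain ⟨p₁, hp₁⟩ := face_eq_singleton_of_dim_ne_one hm0 hQ₁cpt hQ₁ne hnotedge
          obtain ⟨p₂, hp₂⟩ := face_eq_singleton_of_dim_ne_one hm0 hQ₂cpt hQ₂ne hd₂m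
          have hp₁A : p₁ ∈ AmaxS S₁ m := by
            obtain ⟨s, hs⟩ := amax_nonempty hS₁ne m
            have hsf : s ∈ face Q₁ m := hA₁f m hs
            rw [hp₁, Set.mem_singleton_iff] at hsf
            rw [← hsf]; exact hs
          have hp₂A : p₂ ∈ AmaxS S₂ m := by
            obtain ⟨s, hs⟩ := amax_nonempty hS₂ne m
            have hsf : s ∈ face Q₂ m := hA₂f m hs
            rw [hp₂, Set.mem_singleton_iff] at hsf
            rw [← hsf]; exact hs
          have hp₁F : p₁ ∈ face Q₁ n := hA₁f n (hU₁ m hmU₁ hp₁A)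
          have hp₂F : p₂ ∈ face Q₂ n := hA₂f n (hU₂ m hmU₂ hp₂A)
          rw [hF₁] at hp₁F
          rw [hF₂] at hp₂F
          obtain ⟨t₁, ht₁, hp₁eq⟩ := hp₁F
          obtain ⟨t₂, ht₂, hp₂eq⟩ := hp₂F
          have hp₁eq' : a₁ + t₁ • e = p₁ := hp₁eq
          have hp₂eq' : a₂ + t₂ • e = p₂ := hp₂eq
          have hmax₁ : ∀ y ∈ Q₁, ⟪y, m⟫ ≤ ⟪p₁, m⟫ := by
            have : p₁ ∈ face Q₁ m := by rw [hp₁]; exact rfl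
            exact this.2
          have hmax₂ : ∀ y ∈ Q₂, ⟪y, m⟫ ≤ ⟪p₂, m⟫ := by
            have : p₂ ∈ face Q₂ m := by rw [hp₂]; exact rfl
            exact this.2
          have ha₁Q : a₁ ∈ Q₁ := face_subset Q₁ n (by
            rw [hF₁]; exact ⟨0, ⟨le_refl 0, hl₁.le⟩, by simp⟩)
          have hb₁Q : a₁ + l₂ • e ∈ Q₁ := face_subset Q₁ n (by
            rw [hF₁]; exact ⟨l₂, ⟨hl₁.le, le_refl _⟩, rfl⟩)
          have ha₂Q : a₂ ∈ Q₂ := face_subset Q₂ n (by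
            rw [hF₂]; exact ⟨0, ⟨le_refl 0, hl₂.le⟩, by simp⟩)
          have hb₂Q : a₂ + l₂ • e ∈ Q₂ := face_subset Q₂ n (by
            rw [hF₂]; exact ⟨l₂, ⟨hl₂.le, le_refl _⟩, rfl⟩)
          have he₁m : endpt Q₁ m = p₁ :=
            endpt_eq_of_singleton (by rw [hp₁, face_singleton])
          have he₂m : endpt Q₂ m = p₂ :=
            endpt_eq_of_singleton (by rw [hp₂, face_singleton])
          rcases lt_or_gt_of_ne hme with hneg | hpos
          · -- p_i = a_i
            have ht₁0 : t₁ = 0 := by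
              have hle := hmax₁ a₁ ha₁Q
              rw [← hp₁eq', hkey] at hle
              by_contra hne
              have hpos' : 0 < t₁ := lt_of_le_of_ne ht₁.1 (Ne.symm hne)
              have := mul_neg_of_pos_of_neg hpos' hneg
              linarith
            have ht₂0 : t₂ = 0 := by
              have hle := hmax₂ a₂ ha₂Q
              rw [← hp₂eq', hkey] at hle
              by_contra hne
              have hpos' : 0 < t₂ := lt_of_le_of_ne ht₂.1 (Ne.symm hne)
              have := mul_neg_of_pos_of_neg hpos' hneg
              linarith
            simp only [hvbdef]
            rw [he₁m, he₂m, ← hp₁eq', ← hp₂eq', ht₁0, ht₂0, hb₁, hb₂]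
            module
          · -- p_i = b_i
            have ht₁l : t₁ = l₂ := by
              have hle := hmax₁ (a₁ + l₂ • e) hb₁Q
              rw [← hp₁eq', hkey, hkey] at hle
              by_contra hne
              have hlt : t₁ < l₂ := lt_of_le_of_ne ht₁.2 hne
              have := mul_lt_mul_of_pos_right hlt hpos
              linarith
            have ht₂l : t₂ = l₂ := by
              have hle := hmax₂ (a₂ + l₂ • e) hb₂Q
              rw [← hp₂eq', hkey, hkey] at hle
              by_contra hne
              have hlt : t₂ < l₂ := lt_of_le_of_ne ht₂.2 hne
              have := mul_lt_mul_of_pos_right hlt hpos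
              linarith
            simp only [hvbdef]
            rw [he₁m, he₂m, ← hp₁eq', ← hp₂eq', ht₁l, ht₂l, hb₁, hb₂]
    · -- POINT CASE
      obtain ⟨p₁, hp₁⟩ := face_eq_singleton_of_dim_ne_one hn hQ₁cpt hQ₁ne hedge
      have hd₂ : faceDim (face Q₂ n) ≠ 1 := fun hd => hedge ((hT n hn).1.mpr hd)
      obtain ⟨p₂, hp₂⟩ := face_eq_singleton_of_dim_ne_one hn hQ₂cpt hQ₂ne hd₂
      have hA₁n : AmaxS S₁ n = {p₁} := by
        rw [← (amax_nonempty hS₁ne n).subset_singleton_iff, ← hp₁]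
        exact hA₁f n
      have hA₂n : AmaxS S₂ n = {p₂} := by
        rw [← (amax_nonempty hS₂ne n).subset_singleton_iff, ← hp₂]
        exact hA₂f n
      refine ⟨U₁ ∩ U₂ ∩ {(0 : E2)}ᶜ, (hU₁o.inter hU₂o).inter isOpen_compl_singleton,
        ⟨⟨hnU₁, hnU₂⟩, hn⟩, fun m hm => hm.2, ?_⟩
      intro m hm
      obtain ⟨⟨hmU₁, hmU₂⟩, -⟩ := hm
      have hf₁m : face Q₁ m = {p₁} := by
        rw [hC₁ m]
        have hsub : AmaxS S₁ m ⊆ {p₁} := hA₁n ▸ hU₁ m hmU₁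
        rw [(amax_nonempty hS₁ne m).subset_singleton_iff.mp hsub, convexHull_singleton]
      have hf₂m : face Q₂ m = {p₂} := by
        rw [hC₂ m]
        have hsub : AmaxS S₂ m ⊆ {p₂} := hA₂n ▸ hU₂ m hmU₂
        rw [(amax_nonempty hS₂ne m).subset_singleton_iff.mp hsub, convexHull_singleton]
      have he₁m : endpt Q₁ m = p₁ := endpt_eq_of_singleton (by rw [hf₁m, face_singleton])
      have he₂m : endpt Q₂ m = p₂ := endpt_eq_of_singleton (by rw [hf₂m, face_singleton])
      have he₁n : endpt Q₁ n = p₁ := endpt_eq_of_singleton (by rw [hp₁, face_singleton])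
      have he₂n : endpt Q₂ n = p₂ := endpt_eq_of_singleton (by rw [hp₂, face_singleton])
      simp only [hvbdef]
      rw [he₁m, he₂m, he₁n, he₂n]
  -- GLOBAL CONSTANCY
  have hpre : IsPreconnected ({(0 : E2)}ᶜ : Set E2) := by
    have hrank : 1 < Module.rank ℝ E2 := by
      have hfr : Module.finrank ℝ E2 = 2 := finrank_euclideanSpace_fin
      rw [← Module.finrank_eq_rank, hfr]
      exact_mod_cast one_lt_two
    exact (isConnected_compl_singleton_of_one_lt_rank hrank 0).isPreconnected
  choose W hWo hWmem hWne hWconst using loc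
  set n₀ : E2 := EuclideanSpace.single 0 (1 : ℝ) with hn₀def
  have hn₀ : n₀ ≠ 0 := by
    intro hh
    have := congrFun (congrArg (fun (z : E2) => (z : Fin 2 → ℝ)) hh) 0
    simp [hn₀def, EuclideanSpace.single_apply] at this
  have hconst : ∀ n : E2, n ≠ 0 → vb n = vb n₀ := by
    by_contra hnc
    push_neg at hnc
    obtain ⟨n₁, hn₁, hne₁⟩ := hnc
    set U : Set E2 := ⋃ (n : E2) (hn : n ≠ 0) (_ : vb n = vb n₀), W n hn with hUdef
    set V : Set E2 := ⋃ (n : E2) (hn : n ≠ 0) (_ : vb n ≠ vb n₀), W n hn with hVdef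
    have hUo : IsOpen U := isOpen_iUnion fun n => isOpen_iUnion fun hn =>
      isOpen_iUnion fun _ => hWo n hn
    have hVo : IsOpen V := isOpen_iUnion fun n => isOpen_iUnion fun hn =>
      isOpen_iUnion fun _ => hWo n hn
    have hcover : ({(0 : E2)}ᶜ : Set E2) ⊆ U ∪ V := by
      intro x hx
      have hx0 : x ≠ 0 := hx
      by_cases hc : vb x = vb n₀
      · exact Or.inl (Set.mem_iUnion.mpr ⟨x, Set.mem_iUnion.mpr ⟨hx0,
          Set.mem_iUnion.mpr ⟨hc, hWmem x hx0⟩⟩⟩)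
      · exact Or.inr (Set.mem_iUnion.mpr ⟨x, Set.mem_iUnion.mpr ⟨hx0,
          Set.mem_iUnion.mpr ⟨hc, hWmem x hx0⟩⟩⟩)
    have hUne : (({(0 : E2)}ᶜ : Set E2) ∩ U).Nonempty :=
      ⟨n₀, hn₀, Set.mem_iUnion.mpr ⟨n₀, Set.mem_iUnion.mpr ⟨hn₀,
        Set.mem_iUnion.mpr ⟨rfl, hWmem n₀ hn₀⟩⟩⟩⟩
    have hVne : (({(0 : E2)}ᶜ : Set E2) ∩ V).Nonempty :=
      ⟨n₁, hn₁, Set.mem_iUnion.mpr ⟨n₁, Set.mem_iUnion.mpr ⟨hn₁,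
        Set.mem_iUnion.mpr ⟨hne₁, hWmem n₁ hn₁⟩⟩⟩⟩
    obtain ⟨z, -, hzU, hzV⟩ := hpre U V hUo hVo hcover hUne hVne
    obtain ⟨nᵤ, hnu⟩ := Set.mem_iUnion.mp hzU
    obtain ⟨hnu0, hnu'⟩ := Set.mem_iUnion.mp hnu
    obtain ⟨hequ, hzWu⟩ := Set.mem_iUnion.mp hnu'
    obtain ⟨nᵥ, hnv⟩ := Set.mem_iUnion.mp hzV
    obtain ⟨hnv0, hnv'⟩ := Set.mem_iUnion.mp hnv
    obtain ⟨heqv, hzWv⟩ := Set.mem_iUnion.mp hnv'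
    have e1 : vb z = vb nᵤ := hWconst nᵤ hnu0 z hzWu
    have e2 : vb z = vb nᵥ := hWconst nᵥ hnv0 z hzWv
    exact heqv (by rw [← e2, e1, hequ])
  set v : E2 := vb n₀ with hvdef
  have hsupp : ∀ n : E2, n ≠ 0 → ∀ p₁ ∈ face Q₁ n, ∀ p₂ ∈ face Q₂ n,
      ⟪p₂, n⟫ = ⟪p₁, n⟫ + ⟪v, n⟫ := by
    intro n hn p₁ hp₁ p₂ hp₂
    have hb₁ := endpt_mem hQ₁cpt hQ₁ne n
    have hb₂ := endpt_mem hQ₂cpt hQ₂ne n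
    have hb₁f : endpt Q₁ n ∈ face Q₁ n := face_subset _ _ hb₁
    have hb₂f : endpt Q₂ n ∈ face Q₂ n := face_subset _ _ hb₂
    have hvn : endpt Q₂ n - endpt Q₁ n = v := hconst n hn
    calc ⟪p₂, n⟫ = ⟪endpt Q₂ n, n⟫ := inner_eq_of_mem_face hp₂ hb₂f
      _ = ⟪endpt Q₁ n + (endpt Q₂ n - endpt Q₁ n), n⟫ := by
          rw [add_sub_cancel]
      _ = ⟪endpt Q₁ n, n⟫ + ⟪endpt Q₂ n - endpt Q₁ n, n⟫ := inner_add_left _ _ _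
      _ = ⟪p₁, n⟫ + ⟪v, n⟫ := by
          rw [hvn, inner_eq_of_mem_face hb₁f hp₁]
  refine ⟨v, ?_⟩
  apply Set.Subset.antisymm
  · -- Q₂ ⊆ v + Q₁
    intro x hx
    refine ⟨x - v, ?_, by show v + (x - v) = x; abel⟩
    by_contra hnot
    obtain ⟨f, u, hfu, hux⟩ := geometric_hahn_banach_closed_point hQ₁cvx hQ₁cpt.isClosed hnot
    set m : E2 := (InnerProductSpace.toDual ℝ E2).symm f with hmdef
    have hfm : ∀ y : E2, f y = ⟪m, y⟫ := fun y => (InnerProductSpace.toDual_symm_apply).symm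
    have hm0 : m ≠ 0 := by
      intro h0
      obtain ⟨q, hq⟩ := hQ₁ne
      have h1 := hfu q hq
      have h2 := hux
      rw [hfm, h0, inner_zero_left] at h1
      rw [hfm, h0, inner_zero_left] at h2
      linarith
    obtain ⟨p₁, hp₁⟩ := face_nonempty hQ₁cpt hQ₁ne m
    obtain ⟨p₂, hp₂⟩ := face_nonempty hQ₂cpt hQ₂ne m
    have hs := hsupp m hm0 p₁ hp₁ p₂ hp₂
    have hchain : f (x - v) ≤ f p₁ := by
      rw [hfm, hfm]
      rw [real_inner_comm (x - v) m, real_inner_comm p₁ m]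
      rw [inner_sub_left]
      have hxp : ⟪x, m⟫ ≤ ⟪p₂, m⟫ := hp₂.2 x hx
      linarith
    have := hfu p₁ hp₁.1
    linarith
  · -- v + Q₁ ⊆ Q₂
    rintro x ⟨z, hz, rfl⟩
    show v + z ∈ Q₂
    by_contra hnot
    obtain ⟨f, u, hfu, hux⟩ := geometric_hahn_banach_closed_point hQ₂cvx hQ₂cpt.isClosed hnot
    set m : E2 := (InnerProductSpace.toDual ℝ E2).symm f with hmdef
    have hfm : ∀ y : E2, f y = ⟪m, y⟫ := fun y => (InnerProductSpace.toDual_symm_apply).symm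
    have hm0 : m ≠ 0 := by
      intro h0
      obtain ⟨q, hq⟩ := hQ₂ne
      have h1 := hfu q hq
      have h2 := hux
      rw [hfm, h0, inner_zero_left] at h1
      rw [hfm, h0, inner_zero_left] at h2
      linarith
    obtain ⟨p₁, hp₁⟩ := face_nonempty hQ₁cpt hQ₁ne m
    obtain ⟨p₂, hp₂⟩ := face_nonempty hQ₂cpt hQ₂ne m
    have hs := hsupp m hm0 p₁ hp₁ p₂ hp₂
    have hchain : f (v + z) ≤ f p₂ := by
      rw [hfm, hfm]
      rw [real_inner_comm (v + z) m, real_inner_comm p₂ m]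
      rw [inner_add_left]
      have hzp : ⟪z, m⟫ ≤ ⟪p₁, m⟫ := hp₁.2 z hz
      linarith
    have := hfu p₂ hp₂.1
    linarith
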